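/- The assignment σ_p ↦ q^{1-l} A_l (ρ_{(k+l-1,1)}(σ_p)^{⊗l}) A_l defines a representation of the Hecke algebra H_{k+l+1} on the l-th exterior power Λ^l V of V = V_{(k+l-1,1)}: the images satisfy the braid relations, locality, and the Hecke quadratic relation x^2 = (q-q^{-1})x + 1 on Λ^l V. -/

import Mathlib

open Finset Matrix

/-- The `q`-number `(m)_q = (q^m - q^{-m})/(q - q^{-1})`. -/
noncomputable def qnum (q : ℂ) (m : ℕ) : ℂ := (q ^ m - q⁻¹ ^ m) / (q - q⁻¹)

/-- The matrix unit `e_{i,j}` on the span of `v_2, ..., v_{k+2}`. -/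
def E (k i j : ℕ) : Matrix (Fin (k+1)) (Fin (k+1)) ℂ :=
  Matrix.of fun a b => if (a : ℕ) + 2 = i ∧ (b : ℕ) + 2 = j then 1 else 0

/-- The corner representation `ρ_{(k,1)}` of the Hecke algebra `H_{k+2}`. -/
noncomputable def rho (k : ℕ) (q : ℂ) (p : ℕ) : Matrix (Fin (k+1)) (Fin (k+1)) ℂ :=
  q • 1 + (qnum q (p-1) / qnum q p) • (E k p (p+1) - E k p p)
        + (qnum q (p+1) / qnum q p) • (E k (p+1) p - E k (p+1) (p+1))

/-- The antisymmetrizer `A_l` on `V^{⊗l}` (with `dim V = n`), written in the basis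
`v_f = v_{f 0} ⊗ ⋯ ⊗ v_{f (l-1)}`:
`A_l(v_g) = (1/l!) Σ_{s ∈ S_l} sgn(s) v_{g∘s}`. -/
noncomputable def Al (n l : ℕ) : Matrix (Fin l → Fin n) (Fin l → Fin n) ℂ :=
  Matrix.of fun f g =>
    ((l.factorial : ℂ))⁻¹ *
      ∑ s : Equiv.Perm (Fin l), ((Equiv.Perm.sign s : ℤ) : ℂ) * (if f = g ∘ s then 1 else 0)

/-- The operator `M^{(m)} = 1^{⊗(m-1)} ⊗ M ⊗ 1^{⊗(l-m)}` acting on the `m`-th factor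
of `V^{⊗l}`. -/
noncomputable def Skron (n l : ℕ) (M : Matrix (Fin n) (Fin n) ℂ) (m : Fin l) :
    Matrix (Fin l → Fin n) (Fin l → Fin n) ℂ :=
  Matrix.of fun f g => ∏ j, if j = m then M (f j) (g j) else (if f j = g j then (1 : ℂ) else 0)

/-- The `l`-fold tensor (Kronecker) power `M^{⊗l}` acting on `V^{⊗l}`. -/
noncomputable def Tpow (n l : ℕ) (M : Matrix (Fin n) (Fin n) ℂ) :
    Matrix (Fin l → Fin n) (Fin l → Fin n) ℂ :=
  Matrix.of fun f g => ∏ j, M (f j) (g j)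

/-- The image of the generator `σ_p` under the wedge-power construction:
`T(p) = q^{1-l} A_l (ρ_{(k+l-1,1)}(σ_p))^{⊗l} A_l`, acting on `V^{⊗l}` (it vanishes on the
complement of `Λ^l V = Im A_l` and preserves `Λ^l V`). -/
noncomputable def Trep (k l : ℕ) (q : ℂ) (p : ℕ) :
    Matrix (Fin l → Fin (k+l-1+1)) (Fin l → Fin (k+l-1+1)) ℂ :=
  q ^ (1 - (l : ℤ)) • (Al (k+l-1+1) l * Tpow (k+l-1+1) l (rho (k+l-1) q p) * Al (k+l-1+1) l)

/-!
`ρ(σ_p) = q + N_p` with `N_p = u_p v_pᵀ` of rank one, and computing the numbers `v_p ⬝ u_r`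
shows that the `N_p` satisfy the Temperley–Lieb relations `N_p² = -(q + q⁻¹) N_p`,
`N_p N_{p±1} N_p = N_p` and `N_p N_r = 0` for `|p - r| ≥ 2`. This gives the braid and locality
relations for `ρ`, and `ρ(σ_p)² = q² + (q - q⁻¹) N_p`.

Since `A_l` is an idempotent commuting with every `M^{⊗l}`,
`A_l M^{⊗l} A_l · A_l M'^{⊗l} A_l = A_l (M M')^{⊗l} A_l`, which carries the braid and locality
relations over to `Λ^l V`. For the quadratic relation, expand `(α + β N)^{⊗l}` over the set `S`
of tensor factors carrying `N`: when `N = u vᵀ` and `|S| ≥ 2`, the term is invariant under the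
transposition of two slots of `S`, so `A_l` kills it, and
`A_l (α + β N)^{⊗l} = α^l A_l + α^{l-1} β A_l Σ_m N^{(m)}`. Hence, with `D = Σ_m N_p^{(m)}`,
`T_p = q A_l + A_l D` and `T_p² = q² A_l + (q - q⁻¹) A_l D`, which is the Hecke relation.
-/

section Antisymmetrizer

open Equiv

variable {n l : ℕ}

def slotPerm (s : Perm (Fin l)) : Matrix (Fin l → Fin n) (Fin l → Fin n) ℂ :=
  Matrix.of fun f g => if f = g ∘ s then 1 else 0

lemma slotPerm_mul (s : Perm (Fin l)) (M : Matrix (Fin l → Fin n) (Fin l → Fin n) ℂ) :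
    slotPerm s * M = M.submatrix (· ∘ ⇑s⁻¹) id := by
  ext f g
  rw [mul_apply, Finset.sum_eq_single (f ∘ ⇑s⁻¹)]
  · simp [slotPerm, Function.comp_assoc]
  · rintro h - hne
    simp only [slotPerm, of_apply, ite_mul, one_mul, zero_mul, ite_eq_right_iff]
    rintro rfl
    simp [Function.comp_assoc] at hne
  · simp

lemma mul_slotPerm (s : Perm (Fin l)) (M : Matrix (Fin l → Fin n) (Fin l → Fin n) ℂ) :
    M * slotPerm s = M.submatrix id (· ∘ ⇑s) := by
  ext f g
  rw [mul_apply, Finset.sum_eq_single (g ∘ s)] <;> simp +contextual [slotPerm]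

lemma cast_sign_mul_self (s : Perm (Fin l)) :
    ((Perm.sign s : ℤ) : ℂ) * ((Perm.sign s : ℤ) : ℂ) = 1 := by
  rw [← Int.cast_mul, ← Units.val_mul, Int.units_mul_self, Units.val_one, Int.cast_one]

lemma Al_eq_sum : Al n l = (l.factorial : ℂ)⁻¹ •
    ∑ s : Perm (Fin l), ((Perm.sign s : ℤ) : ℂ) • slotPerm s := by
  ext f g
  simp [Al, slotPerm, Matrix.sum_apply]

lemma slotPerm_mul_slotPerm (s t : Perm (Fin l)) :
    slotPerm t * slotPerm s = (slotPerm (s * t) : Matrix (Fin l → Fin n) _ ℂ) := by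
  rw [slotPerm_mul]
  ext f g
  simp only [slotPerm, submatrix_apply, id, of_apply, Perm.inv_def,
    Equiv.comp_symm_eq, Perm.coe_mul, Function.comp_assoc]
  congr

lemma Al_mul_slotPerm (s : Perm (Fin l)) :
    Al n l * slotPerm s = ((Perm.sign s : ℤ) : ℂ) • Al n l := by
  rw [Al_eq_sum, Matrix.smul_mul, smul_comm, Finset.sum_mul]
  congr 1
  rw [Finset.smul_sum]
  apply Fintype.sum_equiv (Equiv.mulLeft s)
  intro t
  rw [Matrix.smul_mul, slotPerm_mul_slotPerm, coe_mulLeft, smul_smul, Perm.sign_mul,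
    Units.val_mul, Int.cast_mul, ← mul_assoc, cast_sign_mul_self, one_mul]

lemma Al_mul_Al : Al n l * Al n l = Al n l := by
  nth_rewrite 2 [Al_eq_sum]
  simp only [Matrix.mul_smul, Finset.mul_sum, Al_mul_slotPerm, smul_smul, cast_sign_mul_self,
    one_smul, Finset.sum_const, Finset.card_univ, Fintype.card_perm, Fintype.card_fin,
    ← Nat.cast_smul_eq_nsmul ℂ]
  rw [inv_mul_cancel₀ (Nat.cast_ne_zero.mpr l.factorial_ne_zero), one_smul]

lemma Tpow_mul (M N : Matrix (Fin n) (Fin n) ℂ) :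
    Tpow n l (M * N) = Tpow n l M * Tpow n l N := by
  ext f g
  simp only [Tpow, of_apply, mul_apply, Finset.prod_univ_sum, Fintype.piFinset_univ,
    Finset.prod_mul_distrib]

lemma slotPerm_commute_Tpow (s : Perm (Fin l)) (M : Matrix (Fin n) (Fin n) ℂ) :
    Commute (slotPerm s) (Tpow n l M) := by
  ext f g
  rw [slotPerm_mul, mul_slotPerm]
  simp only [Tpow, submatrix_apply, id, of_apply, Function.comp_apply]
  exact (Equiv.prod_comp s _).symm.trans (by simp)

lemma Al_commute_Tpow (M : Matrix (Fin n) (Fin n) ℂ) : Commute (Al n l) (Tpow n l M) := by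
  rw [Al_eq_sum]
  exact (Commute.sum_left _ _ _ fun s _ => (slotPerm_commute_Tpow s M).smul_left _).smul_left _

lemma Al_mul_Tpow_mul_Al (M : Matrix (Fin n) (Fin n) ℂ) :
    Al n l * Tpow n l M * Al n l = Al n l * Tpow n l M := by
  rw [(Al_commute_Tpow M).eq, Matrix.mul_assoc, Al_mul_Al]

lemma Al_mul_Tpow_mul_Al_mul_Tpow (M N : Matrix (Fin n) (Fin n) ℂ) :
    Al n l * Tpow n l M * (Al n l * Tpow n l N) = Al n l * Tpow n l (M * N) := by
  rw [← Matrix.mul_assoc, Al_mul_Tpow_mul_Al, Matrix.mul_assoc, Tpow_mul]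

end Antisymmetrizer

section RankOneExpansion

open Equiv

variable {n l : ℕ}

def tensorOn (N : Matrix (Fin n) (Fin n) ℂ) (S : Finset (Fin l)) :
    Matrix (Fin l → Fin n) (Fin l → Fin n) ℂ :=
  Matrix.of fun f g => ∏ j, if j ∈ S then N (f j) (g j) else if f j = g j then (1 : ℂ) else 0

lemma tensorOn_apply (N : Matrix (Fin n) (Fin n) ℂ) (S : Finset (Fin l)) (f g : Fin l → Fin n) :
    tensorOn N S f g
      = (∏ j ∈ S, N (f j) (g j)) * ∏ j ∈ Sᶜ, if f j = g j then (1 : ℂ) else 0 := by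
  rw [tensorOn, of_apply, compl_eq_univ_sdiff]
  exact (prod_piecewise univ S _ _).trans (by rw [univ_inter])

lemma tensorOn_empty (N : Matrix (Fin n) (Fin n) ℂ) : tensorOn N (∅ : Finset (Fin l)) = 1 := by
  ext f g
  simp [tensorOn, one_apply, Finset.prod_boole, funext_iff]

lemma Skron_eq_tensorOn (N : Matrix (Fin n) (Fin n) ℂ) (m : Fin l) :
    Skron n l N m = tensorOn N {m} := by
  ext f g
  simp [Skron, tensorOn]

lemma Tpow_smul_one_add_smul (α β : ℂ) (N : Matrix (Fin n) (Fin n) ℂ) :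
    Tpow n l (α • 1 + β • N)
      = ∑ S : Finset (Fin l), (α ^ (l - #S) * β ^ #S) • tensorOn N S := by
  ext f g
  simp only [Tpow, tensorOn_apply, of_apply, Matrix.add_apply, Matrix.smul_apply, smul_eq_mul,
    Matrix.sum_apply, one_apply]
  simp_rw [add_comm (α * _), Finset.prod_add, Finset.powerset_univ, ← compl_eq_univ_sdiff,
    prod_mul_distrib, prod_const, card_compl, Fintype.card_fin]
  exact sum_congr rfl fun S _ => by ring

lemma slotPerm_mul_tensorOn_vecMulVec (u v : Fin n → ℂ) (S : Finset (Fin l)) (s : Perm (Fin l))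
    (hs : ∀ j ∉ S, s j = j) :
    slotPerm s * tensorOn (vecMulVec u v) S = tensorOn (vecMulVec u v) S := by
  have hs' : ∀ j ∉ S, s⁻¹ j = j := fun j hj => Perm.inv_eq_iff_eq.2 (hs j hj).symm
  rw [slotPerm_mul]
  ext f g
  simp only [submatrix_apply, id, tensorOn_apply, vecMulVec_apply, Function.comp_apply,
    prod_mul_distrib]
  rw [Perm.prod_comp s⁻¹ S (fun j => u (f j)) fun j hj => by_contra fun h => hj (hs' j h)]
  congr 1
  exact prod_congr rfl fun j hj => by simp only [hs' j (mem_compl.1 hj)]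

lemma Al_mul_tensorOn_vecMulVec_eq_zero (u v : Fin n → ℂ) {S : Finset (Fin l)}
    (hS : S.Nontrivial) : Al n l * tensorOn (vecMulVec u v) S = 0 := by
  obtain ⟨m, hm, m', hm', hne⟩ := hS
  suffices h : Al n l * tensorOn (vecMulVec u v) S = -(Al n l * tensorOn (vecMulVec u v) S) by
    ext f g
    exact self_eq_neg.1 (by simpa using congr_fun₂ h f g)
  conv_lhs => rw [← slotPerm_mul_tensorOn_vecMulVec u v S (swap m m') fun j hj =>
    swap_apply_of_ne_of_ne (ne_of_mem_of_not_mem hm hj).symm (ne_of_mem_of_not_mem hm' hj).symm]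
  rw [← Matrix.mul_assoc, Al_mul_slotPerm, Perm.sign_swap hne, Matrix.smul_mul]
  simp

noncomputable def Ssum (n l : ℕ) (N : Matrix (Fin n) (Fin n) ℂ) :
    Matrix (Fin l → Fin n) (Fin l → Fin n) ℂ :=
  ∑ m, Skron n l N m

lemma Al_mul_Tpow_smul_one_add_smul_vecMulVec (α β : ℂ) (u v : Fin n → ℂ) :
    Al n l * Tpow n l (α • 1 + β • vecMulVec u v)
      = α ^ l • Al n l
        + (α ^ ((l : ℤ) - 1) * β) • (Al n l * Ssum n l (vecMulVec u v)) := by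
  rw [Tpow_smul_one_add_smul, Finset.mul_sum]
  simp only [Matrix.mul_smul]
  rw [← Finset.sum_subset
      (subset_univ (insert ∅ (univ.map ⟨singleton, singleton_injective (α := Fin l)⟩))),
    sum_insert (by simp), sum_map]
  · simp only [card_empty, tensorOn_empty, pow_zero, mul_one, Nat.sub_zero, Ssum,
      Finset.mul_sum, Finset.smul_sum, Skron_eq_tensorOn]
    congr 1
    refine sum_congr rfl fun m _ => ?_
    have hl : ((l - 1 : ℕ) : ℤ) = l - 1 := by have := m.pos; omega
    simp [← hl, zpow_natCast]
  · intro S _ hS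
    simp only [mem_insert, mem_map, Function.Embedding.coeFn_mk, not_or, not_exists,
      not_and] at hS
    have hS' : S.Nontrivial := (nonempty_iff_ne_empty.2 hS.1).exists_eq_singleton_or_nontrivial
      |>.resolve_left fun ⟨a, ha⟩ => hS.2 a (mem_univ a) ha.symm
    rw [Al_mul_tensorOn_vecMulVec_eq_zero u v hS', smul_zero]

end RankOneExpansion

section TemperleyLieb

variable {R : Type*} [Ring R] [Algebra ℂ R]

lemma smul_one_add_mul_self (q : ℂ) {X : R} (hX : X * X = -(q + q⁻¹) • X) :
    (q • 1 + X) * (q • 1 + X) = (q * q) • 1 + (q - q⁻¹) • X := by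
  simp only [add_mul, mul_add, smul_mul_assoc, mul_smul_comm, one_mul, mul_one, hX]
  module

lemma smul_one_add_braid (q : ℂ) (hq : q ≠ 0) {X Y : R} (hX : X * X = -(q + q⁻¹) • X)
    (hY : Y * Y = -(q + q⁻¹) • Y) (hXYX : X * Y * X = X) (hYXY : Y * X * Y = Y) :
    (q • 1 + X) * (q • 1 + Y) * (q • 1 + X)
      = (q • 1 + Y) * (q • 1 + X) * (q • 1 + Y) := by
  simp only [add_mul, mul_add, smul_mul_assoc, mul_smul_comm, one_mul, mul_one, hX, hY, hXYX,
    hYXY]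
  match_scalars <;> field_simp <;> ring

end TemperleyLieb

section CornerRepresentation

variable (k : ℕ) (q : ℂ)

-- `v_i`, the coordinate `a` standing for `v_{a+2}`; zero when `i` is out of range.
def basisVec (i : ℕ) : Fin (k+1) → ℂ := fun a => if (a : ℕ) + 2 = i then 1 else 0

lemma E_eq_vecMulVec (i j : ℕ) : E k i j = vecMulVec (basisVec k i) (basisVec k j) := by
  ext a b
  by_cases h : (a : ℕ) + 2 = i <;> simp [E, basisVec, vecMulVec_apply, h]

variable {k} in
lemma basisVec_dotProduct_basisVec_of_ne {i j : ℕ} (h : i ≠ j) :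
    basisVec k i ⬝ᵥ basisVec k j = 0 :=
  Finset.sum_eq_zero fun a _ => by simp only [basisVec]; split_ifs <;> first | omega | simp

variable {k} in
lemma basisVec_dotProduct_self {i : ℕ} (h2 : 2 ≤ i) (hk : i ≤ k + 2) :
    basisVec k i ⬝ᵥ basisVec k i = 1 := by
  rw [dotProduct, Finset.sum_eq_single ⟨i - 2, by omega⟩]
  · simp [basisVec, Nat.sub_add_cancel h2]
  · intro a _ ha
    simp only [basisVec, mul_ite, mul_one, mul_zero, ite_eq_right_iff]
    exact fun h => absurd (Fin.ext (by simp; omega)) ha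
  · simp

lemma qnum_zero : qnum q 0 = 0 := by simp [qnum]

variable {q} in
lemma qnum_pred_add_qnum_succ (hq : q ≠ 0) {p : ℕ} (hp : 1 ≤ p) :
    qnum q (p - 1) + qnum q (p + 1) = (q + q⁻¹) * qnum q p := by
  obtain ⟨m, rfl⟩ : ∃ m, p = m + 1 := ⟨p - 1, by omega⟩
  rw [qnum, qnum, qnum, ← add_div, ← mul_div_assoc, Nat.add_sub_cancel]
  congr 1
  have h : q * q⁻¹ = 1 := mul_inv_cancel₀ hq
  ring_nf
  linear_combination (q⁻¹ ^ m - q ^ m) * h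

noncomputable def rhoCol (p : ℕ) : Fin (k+1) → ℂ :=
  (qnum q (p+1) / qnum q p) • basisVec k (p+1) - (qnum q (p-1) / qnum q p) • basisVec k p

def rhoRow (p : ℕ) : Fin (k+1) → ℂ := basisVec k p - basisVec k (p+1)

lemma rho_eq (p : ℕ) : rho k q p = q • 1 + vecMulVec (rhoCol k q p) (rhoRow k p) := by
  simp only [rho, E_eq_vecMulVec, rhoCol, rhoRow, sub_vecMulVec, vecMulVec_sub, smul_vecMulVec]
  module

variable {k q}

lemma rhoRow_dotProduct_rhoCol (hq : q ≠ 0) {p : ℕ} (h1 : 1 ≤ p) (h2 : p ≤ k + 1)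
    (hp : qnum q p ≠ 0) : rhoRow k p ⬝ᵥ rhoCol k q p = -(q + q⁻¹) := by
  have hself : qnum q (p - 1) * (basisVec k p ⬝ᵥ basisVec k p) = qnum q (p - 1) := by
    rcases Nat.lt_or_ge p 2 with hp1 | hp2
    · rw [show p - 1 = 0 by omega, qnum_zero, zero_mul]
    · rw [basisVec_dotProduct_self hp2 (by omega), mul_one]
  simp only [rhoRow, rhoCol, sub_dotProduct, dotProduct_sub, dotProduct_smul, smul_eq_mul,
    basisVec_dotProduct_self (k := k) (i := p + 1) (by omega) (by omega),
    basisVec_dotProduct_basisVec_of_ne (show p ≠ p + 1 by omega),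
    basisVec_dotProduct_basisVec_of_ne (show p + 1 ≠ p by omega)]
  rw [sub_zero, div_mul_eq_mul_div (qnum q (p - 1)), hself]
  calc _ = -((qnum q (p - 1) + qnum q (p + 1)) / qnum q p) := by ring
    _ = _ := by rw [qnum_pred_add_qnum_succ hq h1, mul_div_assoc, div_self hp, mul_one]

lemma rhoRow_dotProduct_rhoCol_succ {p : ℕ} (h1 : 1 ≤ p) (h2 : p + 1 ≤ k + 1) :
    rhoRow k p ⬝ᵥ rhoCol k q (p + 1) = qnum q p / qnum q (p + 1) := by
  simp [rhoRow, rhoCol, basisVec_dotProduct_self (k := k) (i := p + 1) (by omega) (by omega),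
    basisVec_dotProduct_basisVec_of_ne (show p ≠ p + 1 + 1 by omega),
    basisVec_dotProduct_basisVec_of_ne (show p ≠ p + 1 by omega),
    basisVec_dotProduct_basisVec_of_ne (show p + 1 ≠ p + 1 + 1 by omega)]

lemma rhoRow_succ_dotProduct_rhoCol {p : ℕ} (h1 : 1 ≤ p) (h2 : p + 1 ≤ k + 1) :
    rhoRow k (p + 1) ⬝ᵥ rhoCol k q p = qnum q (p + 1) / qnum q p := by
  simp [rhoRow, rhoCol, basisVec_dotProduct_self (k := k) (i := p + 1) (by omega) (by omega),
    basisVec_dotProduct_basisVec_of_ne (show p + 1 ≠ p by omega),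
    basisVec_dotProduct_basisVec_of_ne (show p + 1 + 1 ≠ p by omega),
    basisVec_dotProduct_basisVec_of_ne (show p + 1 + 1 ≠ p + 1 by omega)]

lemma rhoRow_dotProduct_rhoCol_eq_zero {p r : ℕ} (h : p + 1 < r ∨ r + 1 < p) :
    rhoRow k p ⬝ᵥ rhoCol k q r = 0 := by
  simp [rhoRow, rhoCol, basisVec_dotProduct_basisVec_of_ne (show p ≠ r by omega),
    basisVec_dotProduct_basisVec_of_ne (show p ≠ r + 1 by omega),
    basisVec_dotProduct_basisVec_of_ne (show p + 1 ≠ r by omega),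
    basisVec_dotProduct_basisVec_of_ne (show p + 1 ≠ r + 1 by omega)]

lemma vecMulVec_rhoCol_mul_self (hq : q ≠ 0) {p : ℕ} (h1 : 1 ≤ p) (h2 : p ≤ k + 1)
    (hp : qnum q p ≠ 0) :
    vecMulVec (rhoCol k q p) (rhoRow k p) * vecMulVec (rhoCol k q p) (rhoRow k p)
      = -(q + q⁻¹) • vecMulVec (rhoCol k q p) (rhoRow k p) := by
  rw [vecMulVec_mul_vecMulVec, vecMulVec_smul, rhoRow_dotProduct_rhoCol hq h1 h2 hp]

lemma rho_mul_self (hq : q ≠ 0) {p : ℕ} (h1 : 1 ≤ p) (h2 : p ≤ k + 1)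
    (hp : qnum q p ≠ 0) :
    rho k q p * rho k q p
      = (q * q) • 1 + (q - q⁻¹) • vecMulVec (rhoCol k q p) (rhoRow k p) := by
  rw [rho_eq]
  exact smul_one_add_mul_self q (vecMulVec_rhoCol_mul_self hq h1 h2 hp)

lemma rho_braid (hq : q ≠ 0) {p : ℕ} (h1 : 1 ≤ p) (h2 : p + 1 ≤ k + 1) (hp : qnum q p ≠ 0)
    (hp' : qnum q (p + 1) ≠ 0) :
    rho k q p * rho k q (p + 1) * rho k q p = rho k q (p + 1) * rho k q p * rho k q (p + 1) := by
  have hinv : qnum q p / qnum q (p + 1) * (qnum q (p + 1) / qnum q p) = 1 := by field_simp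
  rw [rho_eq, rho_eq]
  refine smul_one_add_braid q hq (vecMulVec_rhoCol_mul_self hq h1 (by omega) hp)
    (vecMulVec_rhoCol_mul_self hq (by omega) h2 hp') ?_ ?_ <;>
  simp only [vecMulVec_mul_vecMulVec, vecMulVec_smul, Matrix.smul_mul, smul_smul,
    rhoRow_dotProduct_rhoCol_succ h1 h2, rhoRow_succ_dotProduct_rhoCol h1 h2, hinv,
    mul_comm _ (qnum q p / qnum q (p + 1)), one_smul]

lemma rho_commute {p r : ℕ} (h : p + 1 < r) : Commute (rho k q p) (rho k q r) := by
  have hpr : Commute (vecMulVec (rhoCol k q p) (rhoRow k p))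
      (vecMulVec (rhoCol k q r) (rhoRow k r)) := by
    simp only [Commute, SemiconjBy, vecMulVec_mul_vecMulVec, zero_smul, vecMulVec_zero,
      rhoRow_dotProduct_rhoCol_eq_zero (.inl h), rhoRow_dotProduct_rhoCol_eq_zero (.inr h)]
  rw [rho_eq, rho_eq]
  exact ((Commute.one_left _).smul_left q).add_left
    (((Commute.one_right _).smul_right q).add_right hpr)

end CornerRepresentation

section ZPow

variable {G₀ : Type*} [GroupWithZero G₀] {a : G₀} {l : ℕ}

lemma zpow_sub_one_eq_inv_zpow_one_sub : a ^ ((l : ℤ) - 1) = (a ^ (1 - (l : ℤ)))⁻¹ := by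
  rw [← _root_.zpow_neg, neg_sub]

lemma pow_eq_mul_inv_zpow_one_sub (ha : a ≠ 0) : a ^ l = a * (a ^ (1 - (l : ℤ)))⁻¹ := by
  rw [← _root_.zpow_neg, ← zpow_one_add₀ ha, ← zpow_natCast]
  congr 1
  ring

end ZPow

section WedgeRepresentation

variable {k l : ℕ} {q : ℂ}

lemma Trep_eq (p : ℕ) :
    Trep k l q p
      = q ^ (1 - (l : ℤ)) • (Al (k+l-1+1) l * Tpow (k+l-1+1) l (rho (k+l-1) q p)) := by
  rw [Trep, Al_mul_Tpow_mul_Al]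

lemma Trep_mul_Trep (p r : ℕ) :
    Trep k l q p * Trep k l q r
      = (q ^ (1 - (l : ℤ)) * q ^ (1 - (l : ℤ))) •
          (Al (k+l-1+1) l * Tpow (k+l-1+1) l (rho (k+l-1) q p * rho (k+l-1) q r)) := by
  rw [Trep_eq, Trep_eq, smul_mul_smul_comm, Al_mul_Tpow_mul_Al_mul_Tpow]

lemma Trep_eq_smul_Al_add (hq : q ≠ 0) (p : ℕ) :
    Trep k l q p = q • Al (k+l-1+1) l
      + Al (k+l-1+1) l * Ssum (k+l-1+1) l (vecMulVec (rhoCol (k+l-1) q p) (rhoRow (k+l-1) p)) := by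
  have h := Al_mul_Tpow_smul_one_add_smul_vecMulVec (l := l) q 1 (rhoCol (k+l-1) q p)
    (rhoRow (k+l-1) p)
  rw [one_smul] at h
  rw [Trep_eq, rho_eq, h, smul_add, smul_smul, smul_smul, zpow_sub_one_eq_inv_zpow_one_sub,
    pow_eq_mul_inv_zpow_one_sub hq]
  have hc : q ^ (1 - (l : ℤ)) ≠ 0 := zpow_ne_zero _ hq
  match_scalars <;> field_simp

lemma Trep_mul_self (hq : q ≠ 0) {p : ℕ} (h1 : 1 ≤ p) (h2 : p ≤ k + l)
    (hp : qnum q p ≠ 0) :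
    Trep k l q p * Trep k l q p = (q * q) • Al (k+l-1+1) l + (q - q⁻¹) •
      (Al (k+l-1+1) l * Ssum (k+l-1+1) l (vecMulVec (rhoCol (k+l-1) q p) (rhoRow (k+l-1) p))) := by
  rw [Trep_mul_Trep, rho_mul_self hq h1 (by omega) hp, Al_mul_Tpow_smul_one_add_smul_vecMulVec,
    smul_add, smul_smul, smul_smul, mul_pow, mul_zpow, zpow_sub_one_eq_inv_zpow_one_sub,
    pow_eq_mul_inv_zpow_one_sub hq]
  have hc : q ^ (1 - (l : ℤ)) ≠ 0 := zpow_ne_zero _ hq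
  match_scalars <;> field_simp

end WedgeRepresentation

theorem wedge_power_representation_general (k l : ℕ) (q : ℂ) (hq : q ≠ 0)
    (hgen : ∀ m : ℕ, 1 ≤ m → m ≤ k + l → qnum q m ≠ 0) :
    (∀ p, 1 ≤ p → p + 1 ≤ k + l →
      Trep k l q p * Trep k l q (p+1) * Trep k l q p
        = Trep k l q (p+1) * Trep k l q p * Trep k l q (p+1)) ∧
    (∀ p r, 1 ≤ p → p ≤ k + l → 1 ≤ r → r ≤ k + l → p + 1 < r →
      Trep k l q p * Trep k l q r = Trep k l q r * Trep k l q p) ∧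
    (∀ p, 1 ≤ p → p ≤ k + l →
      Trep k l q p * Trep k l q p = (q - q⁻¹) • Trep k l q p + Al (k+l-1+1) l) := by
  refine ⟨fun p h1 h2 => ?_, fun p r _ _ _ _ hpr => ?_, fun p h1 h2 => ?_⟩
  · simp only [Trep_eq, smul_mul_smul_comm, Al_mul_Tpow_mul_Al_mul_Tpow,
      rho_braid (k := k + l - 1) hq h1 (by omega) (hgen p h1 (by omega))
        (hgen (p + 1) (by omega) h2)]
  · rw [Trep_mul_Trep, Trep_mul_Trep, (rho_commute hpr).eq]
  · rw [Trep_mul_self hq h1 h2 (hgen p h1 h2), Trep_eq_smul_Al_add hq]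
    match_scalars
    · field_simp
      ring
    · field_simp

/-- `σ_p ↦ q^{1-l} A_l ρ_{(k+l-1,1)}(σ_p)^{⊗l} A_l` defines a representation of the Hecke
algebra `H_{k+l+1}` on `Λ^l V = Im A_l`: the images satisfy the braid relations, locality,
and the Hecke relation `x² = (q-q⁻¹) x + 1` on `Λ^l V` (the identity of `Λ^l V` being the
projector `A_l`). -/
theorem wedge_power_representation (k l : ℕ) (hl : 1 ≤ l) (q : ℂ) (hq : q ≠ 0)
    (hgen : ∀ m : ℕ, 1 ≤ m → m ≤ k + l → qnum q m ≠ 0) :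
    (∀ p, 1 ≤ p → p + 1 ≤ k + l →
      Trep k l q p * Trep k l q (p+1) * Trep k l q p
        = Trep k l q (p+1) * Trep k l q p * Trep k l q (p+1)) ∧
    (∀ p r, 1 ≤ p → p ≤ k + l → 1 ≤ r → r ≤ k + l → p + 1 < r →
      Trep k l q p * Trep k l q r = Trep k l q r * Trep k l q p) ∧
    (∀ p, 1 ≤ p → p ≤ k + l →
      Trep k l q p * Trep k l q p = (q - q⁻¹) • Trep k l q p + Al (k+l-1+1) l) :=
  wedge_power_representation_general k l q hq hgen
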